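/- arXiv:1410.2280 — 5 statements merged into one kernel-verified Lean document; each statement's English description precedes it below -/
import Mathlib

section
/- If f : M × M → N is a bilinear map of abelian groups and M is divisible, then the two-sided kernel C(f) = {x ∈ M : f(x,z) = 0 = f(z,x) for all z ∈ M} is a divisible subgroup of M. -/
theorem AddMonoidHom.nsmul_apply_eq_apply_nsmul {M P N : Type*} [AddCommMonoid M]
    [AddCommMonoid P] [AddCommMonoid N] (f : M →+ P →+ N) (n : ℕ) (x : M) (y : P) :
    f (n • x) y = f x (n • y) := by
  rw [map_nsmul, AddMonoidHom.nsmul_apply, map_nsmul]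

/-- If `M` is divisible then the two-sided kernel of a bilinear map `f : M × M → N`
is a divisible subgroup of `M`. -/
theorem stmt_1 {M N : Type*} [AddCommGroup M] [AddCommGroup N]
    (f : M →+ M →+ N)
    (hdiv : ∀ (a : M) (m : ℕ), 0 < m → ∃ a' : M, m • a' = a)
    (x : M) (hx : ∀ z : M, f x z = 0 ∧ f z x = 0) (m : ℕ) (hm : 0 < m) :
    ∃ x' : M, m • x' = x ∧ ∀ z : M, f x' z = 0 ∧ f z x' = 0 := by
  obtain ⟨x', rfl⟩ := hdiv x m hm
  refine ⟨x', rfl, fun z => ?_⟩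
  -- Moving the factor `m` from `z` onto `x'` reduces to `x = m • x'` being in the kernel.
  obtain ⟨z', rfl⟩ := hdiv z m hm
  constructor
  · rw [← f.nsmul_apply_eq_apply_nsmul]
    exact (hx z').1
  · rw [f.nsmul_apply_eq_apply_nsmul]
    exact (hx z').2
end

section
/- Let R be a nonassociative ring whose additive group is divisible. Then Ann(R) ∩ R² is a divisible subgroup of R, where R² is the additive subgroup generated by all products x·y. -/
/-!
Every element of `R²` is a ℤ-combination of products `a * b`, and `a * b = m • (a' * b)` for
`m • a' = a`, so `R²` is divisible. If moreover `m • w = z` with `z` annihilating, then `w`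
annihilates too: writing `y = m • y'`, we get `w * y = (m • w) * y' = z * y' = 0`, and likewise
on the other side.
-/

theorem AddSubgroup.exists_nsmul_eq_of_mem_closure {G : Type*} [AddCommGroup G] {s : Set G}
    {m : ℕ} (hs : ∀ x ∈ s, ∃ x' ∈ closure s, m • x' = x) {z : G} (hz : z ∈ closure s) :
    ∃ z' ∈ closure s, m • z' = z := by
  induction hz using AddSubgroup.closure_induction with
  | mem x hx => exact hs x hx
  | zero => exact ⟨0, zero_mem _, smul_zero m⟩
  | add x y _ _ ihx ihy =>
    obtain ⟨x', hx', rfl⟩ := ihx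
    obtain ⟨y', hy', rfl⟩ := ihy
    exact ⟨x' + y', add_mem hx' hy', smul_add m x' y'⟩
  | neg x _ ihx =>
    obtain ⟨x', hx', rfl⟩ := ihx
    exact ⟨-x', neg_mem hx', smul_neg m x'⟩

section NonUnitalNonAssocRing

variable {R : Type*} [NonUnitalNonAssocRing R] {m : ℕ}

theorem exists_nsmul_eq_of_mem_closure_mul (hdiv : ∀ a : R, ∃ a', m • a' = a) {z : R}
    (hz : z ∈ AddSubgroup.closure {z : R | ∃ x y : R, z = x * y}) :
    ∃ z' ∈ AddSubgroup.closure {z : R | ∃ x y : R, z = x * y}, m • z' = z := by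
  refine AddSubgroup.exists_nsmul_eq_of_mem_closure ?_ hz
  rintro _ ⟨a, b, rfl⟩
  obtain ⟨a', rfl⟩ := hdiv a
  exact ⟨a' * b, AddSubgroup.subset_closure ⟨a', b, rfl⟩, (smul_mul_assoc m a' b).symm⟩

theorem mul_eq_zero_and_mul_eq_zero_of_nsmul (hdiv : ∀ a : R, ∃ a', m • a' = a) {w : R}
    (hw : ∀ y : R, m • w * y = 0 ∧ y * m • w = 0) (y : R) : w * y = 0 ∧ y * w = 0 := by
  obtain ⟨y', rfl⟩ := hdiv y
  constructor
  · rw [mul_smul_comm, ← smul_mul_assoc, (hw y').1]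
  · rw [smul_mul_assoc, ← mul_smul_comm, (hw y').2]

end NonUnitalNonAssocRing

/-- In a nonassociative ring with divisible additive group, `Ann(R) ∩ R²` is a
divisible subgroup. -/
theorem stmt_10 {R : Type*} [NonUnitalNonAssocRing R]
    (hdiv : ∀ (a : R) (m : ℕ), 0 < m → ∃ a' : R, m • a' = a) :
    let Ann : Set R := {x | ∀ y : R, x * y = 0 ∧ y * x = 0}
    let Sq : AddSubgroup R := AddSubgroup.closure {z : R | ∃ x y : R, z = x * y}
    ∀ z ∈ Ann ∩ (Sq : Set R), ∀ m : ℕ, 0 < m →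
      ∃ z' ∈ Ann ∩ (Sq : Set R), m • z' = z := by
  intro Ann Sq z ⟨hzAnn, hzSq⟩ m hm
  have hdiv_m : ∀ a : R, ∃ a', m • a' = a := fun a => hdiv a m hm
  obtain ⟨w, hwSq, rfl⟩ := exists_nsmul_eq_of_mem_closure_mul hdiv_m hzSq
  exact ⟨w, ⟨mul_eq_zero_and_mul_eq_zero_of_nsmul hdiv_m hzAnn, hwSq⟩, rfl⟩
end

section
/- Let R be a nonassociative ring whose additive group is divisible, and let R₀ be a subgroup of Ann(R) such that Ann(R) = R₀ ⊕ (Ann(R) ∩ R²). If R² is torsion-free, then R₀ is a divisible subgroup. -/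
/-!
Given `x ∈ R₀` and `m > 0`, pick `a` with `m • a = x`. Every product `a * y` lies in `R²` and is
killed by `m`, so `a` annihilates `R`. Writing `a = r + s` with `r ∈ R₀` and `s ∈ Ann(R) ∩ R²`,
the element `m • s = x - m • r` lies in both summands, hence vanishes, so `s = 0` by torsion-freeness
and `m • r = x`.
-/

theorem AddSubgroup.exists_mem_nsmul_eq_of_inf_eq_bot {G : Type*} [AddCommGroup G]
    {A B : AddSubgroup G} (hAB : A ⊓ B = ⊥) {m : ℕ} (hB : ∀ z ∈ B, m • z = 0 → z = 0)
    {a : G} (ha : a ∈ A ⊔ B) (hma : m • a ∈ A) : ∃ r ∈ A, m • r = m • a := by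
  obtain ⟨r, hr, s, hs, rfl⟩ := AddSubgroup.mem_sup.mp ha
  have hms : m • s ∈ A ⊓ B := by
    refine ⟨?_, B.nsmul_mem hs m⟩
    have : m • s = m • (r + s) - m • r := by rw [smul_add]; abel
    rw [this]
    exact A.sub_mem hma (A.nsmul_mem hr m)
  rw [hAB, AddSubgroup.mem_bot] at hms
  refine ⟨r, hr, ?_⟩
  rw [hB s hs hms, add_zero]

theorem mem_annihilator_of_nsmul_mem {R : Type*} [NonUnitalNonAssocRing R]
    {Ann Sq : AddSubgroup R} (hAnn : ∀ x : R, x ∈ Ann ↔ ∀ y : R, x * y = 0 ∧ y * x = 0)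
    (hmul : ∀ u v : R, u * v ∈ Sq) {m : ℕ} (htf : ∀ z ∈ Sq, m • z = 0 → z = 0)
    {a : R} (hma : m • a ∈ Ann) : a ∈ Ann := by
  rw [hAnn] at hma ⊢
  intro y
  constructor
  · exact htf _ (hmul a y) (by rw [← smul_mul_assoc, (hma y).1])
  · exact htf _ (hmul y a) (by rw [← mul_smul_comm, (hma y).2])

/-- In a nonassociative ring with divisible additive group, if `R₀` is a direct
complement of `Ann(R) ∩ R²` in `Ann(R)` and `R²` is torsion-free, then `R₀` is
divisible. -/
theorem stmt_12 {R : Type*} [NonUnitalNonAssocRing R]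
    (hdiv : ∀ (a : R) (m : ℕ), 0 < m → ∃ a' : R, m • a' = a)
    (Ann : AddSubgroup R)
    (hAnn : ∀ x : R, x ∈ Ann ↔ ∀ y : R, x * y = 0 ∧ y * x = 0)
    (Sq : AddSubgroup R)
    (hSq : Sq = AddSubgroup.closure {z : R | ∃ x y : R, z = x * y})
    (htf : ∀ z ∈ Sq, ∀ k : ℤ, k ≠ 0 → k • z = 0 → z = 0)
    (R0 : AddSubgroup R) (hR0le : R0 ≤ Ann)
    (hdisj : R0 ⊓ (Ann ⊓ Sq) = ⊥) (hsum : R0 ⊔ (Ann ⊓ Sq) = Ann) :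
    ∀ x ∈ R0, ∀ m : ℕ, 0 < m → ∃ x' ∈ R0, m • x' = x := by
  intro x hx m hm
  obtain ⟨a, rfl⟩ := hdiv x m hm
  have hmul : ∀ u v : R, u * v ∈ Sq := fun u v => by
    rw [hSq]
    exact AddSubgroup.subset_closure ⟨u, v, rfl⟩
  have htf_m : ∀ z ∈ Sq, m • z = 0 → z = 0 := fun z hz hmz =>
    htf z hz m (by exact_mod_cast hm.ne') (by rwa [natCast_zsmul])
  have haAnn : a ∈ Ann := mem_annihilator_of_nsmul_mem hAnn hmul htf_m (hR0le hx)
  exact AddSubgroup.exists_mem_nsmul_eq_of_inf_eq_bot hdisj (fun z hz => htf_m z hz.2)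
    (by rwa [hsum]) hx
end

section
/- In the free nilpotent-of-class-2 Lie ring over ℤ on generators s, t modulo the relations making u := (1/2)[s,t] an added generator — concretely, in the Lie ring R with underlying abelian group ℤs ⊕ ℤt ⊕ ℤu and bracket determined by [s,t] = 2u, [s,u] = [t,u] = 0 — the annihilator Ann(R) equals ℤu, the derived subring R² equals 2ℤu, and 2ℤu has no direct complement in ℤu; hence R admits no addition (no splitting of Ann(R) over Ann(R) ∩ R²). -/
/-!
The bracket only sees the `s`- and `t`-coordinates and always lands in `2ℤu`; reading it off
against `s` and `t` gives `Ann(R) = ℤu`, and `[k s, t] = 2k u` gives `R² = 2ℤu`. In a torsion-free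
group a subgroup `C` meeting `S` trivially with `n • C ≤ S` must be trivial, since `n • c ∈ C ⊓ S`.
Here `2 • ℤu ≤ 2ℤu`, so a complement of `2ℤu` in `ℤu` would be `0`, forcing `u ∈ 2ℤu`.
-/

theorem AddSubgroup.eq_bot_of_inf_eq_bot_of_nsmul_mem {M : Type*} [AddCommGroup M]
    [IsAddTorsionFree M] {C S : AddSubgroup M} {n : ℕ} (hn : n ≠ 0) (hCS : C ⊓ S = ⊥)
    (hnC : ∀ c ∈ C, n • c ∈ S) : C = ⊥ := by
  refine (AddSubgroup.eq_bot_iff_forall C).2 fun c hc => ?_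
  have hnc : n • c ∈ C ⊓ S := ⟨AddSubgroup.nsmul_mem C hc n, hnC c hc⟩
  rw [hCS, AddSubgroup.mem_bot] at hnc
  exact (nsmul_eq_zero_iff_right hn).1 hnc

namespace HalfHeisenberg

/-- Coordinates `(a, b, c)` stand for `a s + b t + c u`. -/
def bracket (x y : ℤ × ℤ × ℤ) : ℤ × ℤ × ℤ := (0, 0, 2 * (x.1 * y.2.1 - y.1 * x.2.1))

theorem mem_zmultiples_mk_iff (n : ℤ) (w : ℤ × ℤ × ℤ) :
    w ∈ AddSubgroup.zmultiples ((0, 0, n) : ℤ × ℤ × ℤ) ↔ w.1 = 0 ∧ w.2.1 = 0 ∧ n ∣ w.2.2 := by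
  obtain ⟨a, b, c⟩ := w
  simp only [AddSubgroup.mem_zmultiples_iff, Prod.ext_iff, Prod.smul_mk, smul_eq_mul, mul_zero]
  constructor
  · rintro ⟨k, rfl, rfl, rfl⟩
    exact ⟨rfl, rfl, dvd_mul_left n k⟩
  · rintro ⟨rfl, rfl, k, rfl⟩
    exact ⟨k, rfl, rfl, mul_comm k n⟩

theorem forall_bracket_eq_zero_iff (x : ℤ × ℤ × ℤ) :
    (∀ y, bracket x y = 0) ↔ x.1 = 0 ∧ x.2.1 = 0 := by
  constructor
  · intro h
    have hs := congrArg (fun p : ℤ × ℤ × ℤ => p.2.2) (h (1, 0, 0))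
    have ht := congrArg (fun p : ℤ × ℤ × ℤ => p.2.2) (h (0, 1, 0))
    simp only [bracket, mul_zero, mul_one, Prod.snd_zero, zero_sub] at hs ht
    omega
  · rintro ⟨h1, h2⟩ y
    simp [bracket, h1, h2]

theorem closure_bracket_eq_zmultiples :
    AddSubgroup.closure {z | ∃ x y, z = bracket x y} =
      AddSubgroup.zmultiples ((0, 0, 2) : ℤ × ℤ × ℤ) := by
  apply le_antisymm
  · rw [AddSubgroup.closure_le]
    rintro _ ⟨x, y, rfl⟩
    exact (mem_zmultiples_mk_iff 2 _).2 ⟨rfl, rfl, dvd_mul_right 2 _⟩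
  · rw [AddSubgroup.zmultiples_le]
    exact AddSubgroup.subset_closure ⟨(1, 0, 0), (0, 1, 0), rfl⟩

end HalfHeisenberg

open HalfHeisenberg in
/-- In the Lie ring `R = ℤs ⊕ ℤt ⊕ ℤu` with `[s,t] = 2u`, `[s,u] = [t,u] = 0`:
the annihilator is `ℤu`, the derived subring is `2ℤu`, and `2ℤu` has no direct
complement in `ℤu`, so `R` admits no addition. -/
theorem stmt_15 :
    let R := ℤ × ℤ × ℤ
    let br : R → R → R := fun x y => (0, 0, 2 * (x.1 * y.2.1 - y.1 * x.2.1))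
    let Sq := AddSubgroup.closure {z : R | ∃ x y : R, z = br x y}
    (∀ x : R, (∀ y : R, br x y = 0) ↔ (x.1 = 0 ∧ x.2.1 = 0)) ∧
    (∀ w : R, w ∈ Sq ↔ (w.1 = 0 ∧ w.2.1 = 0 ∧ 2 ∣ w.2.2)) ∧
    ¬ ∃ C : AddSubgroup R,
        (∀ c ∈ C, ∀ y : R, br c y = 0) ∧
        C ⊓ Sq = ⊥ ∧
        (∀ w : R, (∀ y : R, br w y = 0) → ∃ c ∈ C, ∃ s ∈ Sq, w = c + s) := by
  intro R br Sq
  have hSq : Sq = AddSubgroup.zmultiples (0, 0, 2) := closure_bracket_eq_zmultiples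
  have hann (x : R) : (∀ y, br x y = 0) ↔ x ∈ AddSubgroup.zmultiples (0, 0, 1) := by
    refine (forall_bracket_eq_zero_iff x).trans ?_
    rw [mem_zmultiples_mk_iff, and_iff_left (one_dvd _)]
  refine ⟨forall_bracket_eq_zero_iff, fun w => hSq ▸ mem_zmultiples_mk_iff 2 w, ?_⟩
  rintro ⟨C, hCann, hCSq, hcompl⟩
  have hC : C = ⊥ := by
    refine AddSubgroup.eq_bot_of_inf_eq_bot_of_nsmul_mem two_ne_zero hCSq fun c hc => ?_
    obtain ⟨k, rfl⟩ := AddSubgroup.mem_zmultiples_iff.1 ((hann c).1 (hCann c hc))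
    rw [hSq, ← natCast_zsmul, smul_comm]
    exact AddSubgroup.zsmul_mem_zmultiples _ k
  obtain ⟨c, hc, s, hs, hu⟩ := hcompl (0, 0, 1) ((hann _).2 (AddSubgroup.mem_zmultiples _))
  rw [hC, AddSubgroup.mem_bot] at hc
  rw [hc, zero_add] at hu
  rw [← hu, hSq, mem_zmultiples_mk_iff] at hs
  exact absurd hs.2.2 (by decide)
end

section
/- In a torsion-free nilpotent group, n-th roots are unique: if G is nilpotent and torsion-free and xⁿ = yⁿ for some positive integer n and x, y ∈ G, then x = y. -/
/-!
If `(d * y) ^ n = y ^ n`, then `d` commutes with `y ^ n`, so the conjugate `d * y * d⁻¹ = ⁅d, y⁆ * y`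
is another `n`-th root of `y ^ n`, obtained from `y` by a factor one step further down a
descending central series. Descending induction along the series (which reaches `⊥` because `G`
is nilpotent) gives `⁅d, y⁆ = 1`; then `d` commutes with `y`, so `d ^ n = 1` and `d = 1` by
torsion-freeness. Applied to `d = x * y⁻¹` this is the theorem.
-/

open scoped commutatorElement

section

variable {G : Type*} [Group G]

theorem commute_pow_of_mul_pow_eq_pow {d y : G} {n : ℕ} (h : (d * y) ^ n = y ^ n) :
    Commute d (y ^ n) := by
  have hdy : Commute (d * y) (y ^ n) := h ▸ Commute.self_pow (d * y) n
  simpa using hdy.mul_left (Commute.self_pow y n).inv_left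

theorem commutatorElement_mul_pow_eq_pow {d y : G} {n : ℕ} (h : (d * y) ^ n = y ^ n) :
    (⁅d, y⁆ * y) ^ n = y ^ n := by
  rw [commutatorElement_def, inv_mul_cancel_right, conj_pow,
    (commute_pow_of_mul_pow_eq_pow h).eq, mul_inv_cancel_right]

theorem eq_one_of_mul_pow_eq_pow_of_mem {H : ℕ → Subgroup G}
    (hH : Subgroup.IsDescendingCentralSeries H)
    {n : ℕ} (htf : ∀ g : G, g ^ n = 1 → g = 1) {k j : ℕ} (hbot : H (k + j) = ⊥)
    {d y : G} (hd : d ∈ H k) (h : (d * y) ^ n = y ^ n) : d = 1 := by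
  induction j generalizing k d y with
  | zero => exact Subgroup.mem_bot.mp (hbot ▸ hd : d ∈ (⊥ : Subgroup G))
  | succ j ih =>
    have hbot' : H (k + 1 + j) = ⊥ := by rwa [add_right_comm, add_assoc]
    have hcomm : ⁅d, y⁆ = 1 :=
      ih hbot' (hH.2 d k hd y) (commutatorElement_mul_pow_eq_pow h)
    have hdy : Commute d y := commutatorElement_eq_one_iff_commute.mp hcomm
    apply htf
    simpa [hdy.mul_pow] using h

end

/-- In a torsion-free nilpotent group, `n`-th roots are unique. -/
theorem stmt_16 {G : Type*} [Group G] (hnil : Group.IsNilpotent G)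
    (htf : ∀ g : G, ∀ n : ℕ, 0 < n → g ^ n = 1 → g = 1)
    (x y : G) (n : ℕ) (hn : 0 < n) (h : x ^ n = y ^ n) : x = y := by
  obtain ⟨m, hm⟩ := Subgroup.nilpotent_iff_lowerCentralSeries.mp hnil
  have hxy : (x * y⁻¹ * y) ^ n = y ^ n := by rwa [inv_mul_cancel_right]
  have hbot : (⊤ : Subgroup G).lowerCentralSeries (0 + m) = ⊥ := by rwa [zero_add]
  exact mul_inv_eq_one.mp <|
    eq_one_of_mul_pow_eq_pow_of_mem Subgroup.lowerCentralSeries_isDescendingCentralSeries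
      (fun g => htf g n hn) hbot (Subgroup.mem_top _) hxy
end
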